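/- For the stationary geometric-sticky Markov chain X^n with parameter α and base distribution p on finite alphabet X, the sum over x ∈ X of p_x²·Pr(x never appears in X^n) is at most 1/((1−α)(n+1)). -/

import Mathlib

/-!
A path that has avoided `a` so far continues to avoid it with probability `1 - (1-α) p_a`,
whatever its last letter, since the chain can only enter `a` through a fresh draw from `p`.
Hence `Pr(a never appears) = (1 - p_a)(1 - (1-α) p_a)^(n-1) ≤ (1 - s)^n` with `s = (1-α) p_a`,
so the `a`-th summand is at most `p_a/(1-α) · s(1-s)^n ≤ p_a/((1-α)(n+1))`, and the `p_a` sum to one.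
-/

open scoped Classical

/-- The probability that the stationary geometric-sticky Markov chain with stickiness
parameter `α` and base distribution `p` (i.e. `X_1 ~ p` and
`Pr(X_i = z | X_{i-1} = y) = α·1[z=y] + (1-α)·p z`) produces the sample path `x`. -/
noncomputable def stickyProb {X : Type*} [DecidableEq X] (α : ℝ) (p : X → ℝ) {n : ℕ}
    (x : Fin n → X) : ℝ :=
  (if h : 0 < n then p (x ⟨0, h⟩) else 1) *
  ∏ i : Fin n, if i.val = 0 then 1 else
    ((if x i = x ⟨i.val - 1, lt_of_le_of_lt (Nat.pred_le _) i.isLt⟩ then α else 0)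
      + (1 - α) * p (x i))

lemma sum_ite_ne_eq_sub {X M : Type*} [Fintype X] [DecidableEq X] [AddCommGroup M]
    (f : X → M) (a : X) :
    ∑ z, (if z ≠ a then f z else 0) = ∑ z, f z - f a := by
  rw [← Finset.sum_filter, Finset.filter_ne', Finset.sum_erase_eq_sub (Finset.mem_univ a)]

section

variable {X : Type*} [DecidableEq X] (α : ℝ) (p : X → ℝ)

noncomputable def stickyTrans (w z : X) : ℝ := (if z = w then α else 0) + (1 - α) * p z

lemma stickyProb_fin_zero (x : Fin 0 → X) : stickyProb α p x = 1 := by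
  simp [stickyProb]

lemma stickyProb_fin_one (x : Fin 1 → X) : stickyProb α p x = p (x 0) := by
  simp [stickyProb]

lemma stickyProb_snoc {m : ℕ} (y : Fin (m + 1) → X) (z : X) :
    stickyProb α p (Fin.snoc y z : Fin (m + 2) → X) =
      stickyProb α p y * stickyTrans α p (y (Fin.last m)) z := by
  have hsnoc : ∀ (k : ℕ) (hk : k < m + 1),
      (Fin.snoc y z : Fin (m + 2) → X) ⟨k, by omega⟩ = y ⟨k, hk⟩ :=
    fun k hk => Fin.snoc_castSucc (α := fun _ => X) z y ⟨k, hk⟩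
  unfold stickyProb
  rw [dif_pos m.succ_pos, dif_pos (m + 1).succ_pos, Fin.prod_univ_castSucc, hsnoc 0 m.succ_pos,
    mul_assoc]
  congr 2
  · refine Finset.prod_congr rfl fun i _ => ?_
    simp only [Fin.snoc_castSucc, Fin.val_castSucc, hsnoc _ (i.val.sub_le 1 |>.trans_lt i.isLt)]
  · simp [stickyTrans, Fin.snoc_last, hsnoc m m.lt_succ_self]
    rfl

variable [Fintype X]

lemma sum_stickyTrans (hsum : ∑ z, p z = 1) (w : X) : ∑ z, stickyTrans α p w z = 1 := by
  simp [stickyTrans, Finset.sum_add_distrib, ← Finset.mul_sum, hsum]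

lemma sum_stickyProb_avoid (hsum : ∑ z, p z = 1) (a : X) (m : ℕ) :
    ∑ x : Fin (m + 1) → X, (if ∀ i, x i ≠ a then stickyProb α p x else 0) =
      (1 - p a) * (1 - (1 - α) * p a) ^ m := by
  induction m with
  | zero =>
    rw [Fintype.sum_equiv (Equiv.funUnique (Fin 1) X) _ (fun z => if z ≠ a then p z else 0)
      (fun x => by simp [stickyProb_fin_one]), sum_ite_ne_eq_sub, hsum, pow_zero, mul_one]
  | succ m ih =>
    have hstep : ∀ y : Fin (m + 1) → X,
        ∑ z, (if ∀ i, (Fin.snoc y z : Fin (m + 2) → X) i ≠ a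
          then stickyProb α p (Fin.snoc y z : Fin (m + 2) → X) else 0) =
        (if ∀ i, y i ≠ a then stickyProb α p y else 0) * (1 - (1 - α) * p a) := by
      intro y
      have hcond : ∀ z, (∀ i, (Fin.snoc y z : Fin (m + 2) → X) i ≠ a) ↔
          (∀ i, y i ≠ a) ∧ z ≠ a := fun z => by
        rw [Fin.forall_fin_succ']
        simp only [Fin.snoc_castSucc, Fin.snoc_last]
      by_cases hy : ∀ i, y i ≠ a
      · simp only [hcond, ite_and, if_pos hy, stickyProb_snoc, ← mul_ite_zero, ← Finset.mul_sum]
        rw [sum_ite_ne_eq_sub, sum_stickyTrans α p hsum]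
        simp [stickyTrans, Ne.symm (hy (Fin.last m))]
      · simp only [hcond, ite_and, if_neg hy, Finset.sum_const_zero, zero_mul]
    calc _ = ∑ y : Fin (m + 1) → X,
          (if ∀ i, y i ≠ a then stickyProb α p y else 0) * (1 - (1 - α) * p a) := by
          rw [← (Fin.snocEquiv fun _ => X).sum_comp, Fintype.sum_prod_type_right]
          exact Finset.sum_congr rfl fun y _ => hstep y
      _ = _ := by rw [← Finset.sum_mul, ih, pow_succ, mul_assoc]

lemma sum_stickyProb_avoid_le (hα0 : 0 ≤ α) (hsum : ∑ z, p z = 1) {a : X} (ha0 : 0 ≤ p a)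
    (ha1 : p a ≤ 1) (n : ℕ) :
    ∑ x : Fin n → X, (if ∀ i, x i ≠ a then stickyProb α p x else 0) ≤
      (1 - (1 - α) * p a) ^ n := by
  cases n with
  | zero => simp [stickyProb_fin_zero]
  | succ m =>
    rw [sum_stickyProb_avoid α p hsum, pow_succ']
    exact mul_le_mul_of_nonneg_right (by nlinarith) (pow_nonneg (by nlinarith) m)

end

lemma mul_one_sub_pow_le_one_div {s : ℝ} (hs0 : 0 ≤ s) (hs1 : s ≤ 1) (k : ℕ) :
    s * (1 - s) ^ k ≤ 1 / (k + 1) := by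
  have hgeom : s * ∑ i ∈ Finset.range (k + 1), (1 - s) ^ i = 1 - (1 - s) ^ (k + 1) := by
    linear_combination -geom_sum_mul (1 - s) (k + 1)
  have hterms : (k + 1 : ℝ) * (1 - s) ^ k ≤ ∑ i ∈ Finset.range (k + 1), (1 - s) ^ i := by
    simpa using Finset.card_nsmul_le_sum (Finset.range (k + 1)) _ _ fun i hi =>
      pow_le_pow_of_le_one (sub_nonneg.2 hs1) (by linarith) (Finset.mem_range_succ_iff.1 hi)
  rw [le_div_iff₀ (by positivity)]
  calc s * (1 - s) ^ k * (k + 1) = s * ((k + 1) * (1 - s) ^ k) := by ring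
    _ ≤ s * ∑ i ∈ Finset.range (k + 1), (1 - s) ^ i := mul_le_mul_of_nonneg_left hterms hs0
    _ ≤ 1 := by rw [hgeom]; linarith [pow_nonneg (sub_nonneg.2 hs1) (k + 1)]

lemma sq_mul_one_sub_mul_pow_le {β q : ℝ} (hβ0 : 0 < β) (hβ1 : β ≤ 1) (hq0 : 0 ≤ q)
    (hq1 : q ≤ 1) (n : ℕ) :
    q ^ 2 * (1 - β * q) ^ n ≤ q / (β * (n + 1)) :=
  calc q ^ 2 * (1 - β * q) ^ n = q / β * (β * q * (1 - β * q) ^ n) := by field_simp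
    _ ≤ q / β * (1 / (n + 1)) := by
      gcongr
      exact mul_one_sub_pow_le_one_div (by positivity) (by nlinarith) n
    _ = q / (β * (n + 1)) := by rw [mul_one_div, div_div]

theorem sticky_sum_sq_missing_le_general
    {X : Type*} [Fintype X] [DecidableEq X] (α : ℝ) (hα0 : 0 ≤ α) (hα1 : α < 1)
    (p : X → ℝ) (hp : ∀ z, 0 ≤ p z) (hsum : ∑ z, p z = 1)
    (n : ℕ) :
    ∑ a : X, (p a) ^ 2 *
        (∑ x : Fin n → X, (if ∀ i, x i ≠ a then stickyProb α p x else 0))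
      ≤ 1 / ((1 - α) * ((n : ℝ) + 1)) := by
  have hβ : 0 < 1 - α := by linarith
  have hp_le_one : ∀ a, p a ≤ 1 := fun a =>
    hsum ▸ Finset.single_le_sum (fun z _ => hp z) (Finset.mem_univ a)
  calc _ ≤ ∑ a : X, p a ^ 2 * (1 - (1 - α) * p a) ^ n :=
        Finset.sum_le_sum fun a _ => mul_le_mul_of_nonneg_left
          (sum_stickyProb_avoid_le α p hα0 hsum (hp a) (hp_le_one a) n) (sq_nonneg _)
    _ ≤ ∑ a : X, p a / ((1 - α) * (n + 1)) :=
        Finset.sum_le_sum fun a _ =>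
          sq_mul_one_sub_mul_pow_le hβ (by linarith) (hp a) (hp_le_one a) n
    _ = 1 / ((1 - α) * ((n : ℝ) + 1)) := by rw [← Finset.sum_div, hsum]

/-- For the stationary geometric-sticky Markov chain of length `n ≥ 1`, the sum over letters
`a` of `p_a² · Pr(a never appears)` is at most `1 / ((1-α)(n+1))`. -/
theorem sticky_sum_sq_missing_le
    {X : Type*} [Fintype X] [DecidableEq X] (α : ℝ) (hα0 : 0 ≤ α) (hα1 : α < 1)
    (p : X → ℝ) (hp : ∀ z, 0 ≤ p z) (hsum : ∑ z, p z = 1)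
    (n : ℕ) (hn : 1 ≤ n) :
    ∑ a : X, (p a) ^ 2 *
        (∑ x : Fin n → X, (if ∀ i, x i ≠ a then stickyProb α p x else 0))
      ≤ 1 / ((1 - α) * ((n : ℝ) + 1)) :=
  sticky_sum_sq_missing_le_general α hα0 hα1 p hp hsum n
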